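/- arXiv:2601.07452 — 2 statements merged into one kernel-verified Lean document; each statement's English description precedes it below -/
import Mathlib

section
/- There exists a segmentation σ and an optimal pricing rule φ for σ with consumer surplus u and producer surplus π if and only if u ≥ 0, π ≥ π*, and u + π ≤ w*. -/
open Finset

/-- A market: a probability vector over the `K` valuations. -/
def IsMarket (K : ℕ) (x : Fin K → ℝ) : Prop :=
  (∀ j, 0 ≤ x j) ∧ ∑ j, x j = 1

/-- Revenue from charging price `v k` in market `x`. -/
def rev {K : ℕ} (v x : Fin K → ℝ) (k : Fin K) : ℝ :=
  v k * ∑ j ∈ Finset.Ici k, x j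

/-- Price `v k` is optimal for market `x`. -/
def OptPrice {K : ℕ} (v x : Fin K → ℝ) (k : Fin K) : Prop :=
  ∀ i, rev v x i ≤ rev v x k

/-- A segmentation of the aggregate market `xstar`: a finitely supported probability
distribution on markets averaging to `xstar`. -/
def IsSegmentation {K : ℕ} (xstar : Fin K → ℝ) (σ : (Fin K → ℝ) →₀ ℝ) : Prop :=
  (∀ x, 0 ≤ σ x) ∧ (∑ x ∈ σ.support, σ x = 1) ∧
  (∀ x ∈ σ.support, IsMarket K x) ∧
  (∑ x ∈ σ.support, σ x • x = xstar)

/-- A pricing rule assigns a probability vector over prices to each market in the support. -/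
def IsPricingRule {K : ℕ} (σ : (Fin K → ℝ) →₀ ℝ) (φ : (Fin K → ℝ) → Fin K → ℝ) : Prop :=
  ∀ x ∈ σ.support, (∀ k, 0 ≤ φ x k) ∧ ∑ k, φ x k = 1

/-- A pricing rule is optimal if it only charges optimal prices. -/
def IsOptimalPricing {K : ℕ} (v : Fin K → ℝ) (σ : (Fin K → ℝ) →₀ ℝ)
    (φ : (Fin K → ℝ) → Fin K → ℝ) : Prop :=
  ∀ x ∈ σ.support, ∀ k, 0 < φ x k → OptPrice v x k

/-- Consumer surplus of a segmentation and pricing rule. -/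
def consumerSurplus {K : ℕ} (v : Fin K → ℝ) (σ : (Fin K → ℝ) →₀ ℝ)
    (φ : (Fin K → ℝ) → Fin K → ℝ) : ℝ :=
  ∑ x ∈ σ.support, σ x * ∑ k, φ x k * ∑ j ∈ Finset.Ici k, (v j - v k) * x j

/-- Producer surplus of a segmentation and pricing rule. -/
def producerSurplus {K : ℕ} (v : Fin K → ℝ) (σ : (Fin K → ℝ) →₀ ℝ)
    (φ : (Fin K → ℝ) → Fin K → ℝ) : ℝ :=
  ∑ x ∈ σ.support, σ x * ∑ k, φ x k * (v k * ∑ j ∈ Finset.Ici k, x j)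

/-- A direct segmentation: markets `xs k` for `k ∈ A`, pairwise distinct, with
`xs k ∈ X_k`, weights `w k > 0` summing to one and averaging to `xstar`. -/
def IsDirectSeg {K : ℕ} (v xstar : Fin K → ℝ) (A : Finset (Fin K))
    (xs : Fin K → Fin K → ℝ) (w : Fin K → ℝ) : Prop :=
  Set.InjOn xs (A : Set (Fin K)) ∧
  (∀ k ∈ A, IsMarket K (xs k)) ∧
  (∀ k ∈ A, OptPrice v (xs k) k) ∧
  (∀ k ∈ A, 0 < w k) ∧
  (∑ k ∈ A, w k = 1) ∧
  (∑ k ∈ A, w k • xs k = xstar)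

/-- Consumer surplus of a direct segmentation (with its direct pricing rule). -/
def directCS {K : ℕ} (v : Fin K → ℝ) (A : Finset (Fin K))
    (xs : Fin K → Fin K → ℝ) (w : Fin K → ℝ) : ℝ :=
  ∑ k ∈ A, w k * ∑ j ∈ Finset.Ici k, (v j - v k) * xs k j

/-- Producer surplus of a direct segmentation (with its direct pricing rule). -/
def directPS {K : ℕ} (v : Fin K → ℝ) (A : Finset (Fin K))
    (xs : Fin K → Fin K → ℝ) (w : Fin K → ℝ) : ℝ :=
  ∑ k ∈ A, w k * (v k * ∑ j ∈ Finset.Ici k, xs k j)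

/-- `x` is the characteristic market `x^S`: supported in `S`, and every price in `S`
yields the same revenue. -/
def IsCharMarket {K : ℕ} (v : Fin K → ℝ) (S : Finset (Fin K)) (x : Fin K → ℝ) : Prop :=
  IsMarket K x ∧ (∀ j ∉ S, x j = 0) ∧ ∀ i ∈ S, ∀ i' ∈ S, rev v x i = rev v x i'

/-- The joint distribution over valuations and prices induced by `(σ, φ)`:
mass of the pair `(v j, v k)`. -/
def jointDist {K : ℕ} (σ : (Fin K → ℝ) →₀ ℝ) (φ : (Fin K → ℝ) → Fin K → ℝ)
    (j k : Fin K) : ℝ :=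
  ∑ x ∈ σ.support, σ x * φ x k * x j

/-- The joint distribution over valuations and prices induced by a direct segmentation
with its direct pricing rule. -/
def directJoint {K : ℕ} (A : Finset (Fin K)) (xs : Fin K → Fin K → ℝ) (w : Fin K → ℝ)
    (j k : Fin K) : ℝ :=
  if k ∈ A then w k * xs k j else 0

/-- The total mass `m_k` of price `v k` under `(σ, φ)`. -/
noncomputable def mass {K : ℕ} (σ : (Fin K → ℝ) →₀ ℝ) (φ : (Fin K → ℝ) → Fin K → ℝ)
    (k : Fin K) : ℝ :=
  ∑ x ∈ σ.support, σ x * φ x k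

/-- The conditional market `x^k` given price `v k` under `(σ, φ)`. -/
noncomputable def condMarket {K : ℕ} (σ : (Fin K → ℝ) →₀ ℝ) (φ : (Fin K → ℝ) → Fin K → ℝ)
    (k : Fin K) : Fin K → ℝ :=
  (mass σ φ k)⁻¹ • ∑ x ∈ σ.support, (σ x * φ x k) • x

/-!
Every segmentation with optimal pricing gives the consumer a nonnegative surplus, gives the
seller at least the revenue of any fixed price `v i` (revenue is linear in the market and the
seller could always charge `v i`), and total surplus never exceeds total value.

Conversely, fix a price `v i` optimal for `xstar`. Greedily peeling off multiples of the
characteristic market of the current support, on which every price of the support is optimal,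
writes `xstar` as a mixture of characteristic markets whose supports all contain `i`. Charging the
lowest valuation of each segment is efficient, charging the highest leaves no consumer surplus,
and the seller earns `π*` either way; mixing these two pricing rules with weights `t`, `1 - t`
traces the bottom edge of the surplus triangle, and mixing the result with perfect price
discrimination (surplus `(0, w*)`) reaches every point of the triangle.
-/

variable {K : ℕ}

theorem sum_mul_sum_mul_apply {ι : Type*} (s : Finset ι) (c : ι → ℝ) (m : ι → Fin K → ℝ)
    (T : Finset (Fin K)) (a : Fin K → ℝ) :
    ∑ i ∈ s, c i * ∑ j ∈ T, a j * m i j = ∑ j ∈ T, a j * (∑ i ∈ s, c i • m i) j := by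
  simp only [Finset.sum_apply, Pi.smul_apply, smul_eq_mul, mul_sum]
  rw [sum_comm]
  exact sum_congr rfl fun _ _ => sum_congr rfl fun _ _ => by ring

theorem sum_mul_rev {ι : Type*} (s : Finset ι) (c : ι → ℝ) (m : ι → Fin K → ℝ)
    (v : Fin K → ℝ) (k : Fin K) :
    ∑ i ∈ s, c i * rev v (m i) k = rev v (∑ i ∈ s, c i • m i) k := by
  have := sum_mul_sum_mul_apply s c m (Ici k) fun _ => v k
  simpa only [rev, ← mul_sum] using this

theorem rev_sub_smul (v x y : Fin K → ℝ) (α : ℝ) (k : Fin K) :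
    rev v (x - α • y) k = rev v x k - α * rev v y k := by
  simp only [rev, Pi.sub_apply, Pi.smul_apply, smul_eq_mul, sum_sub_distrib, ← mul_sum]
  ring

section MarketSurplus

variable (v : Fin K → ℝ)

def marketCS (p x : Fin K → ℝ) : ℝ :=
  ∑ k, p k * ∑ j ∈ Ici k, (v j - v k) * x j

def marketPS (p x : Fin K → ℝ) : ℝ :=
  ∑ k, p k * rev v x k

variable {v}

theorem marketCS_nonneg (hv : Monotone v) {p x : Fin K → ℝ} (hp : ∀ k, 0 ≤ p k)
    (hx : ∀ j, 0 ≤ x j) : 0 ≤ marketCS v p x :=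
  sum_nonneg fun k _ => mul_nonneg (hp k) <| sum_nonneg fun j hj =>
    mul_nonneg (sub_nonneg.2 (hv (mem_Ici.1 hj))) (hx j)

theorem rev_le_marketPS {p x : Fin K → ℝ} (hp : ∀ k, 0 ≤ p k) (hp1 : ∑ k, p k = 1)
    (hopt : ∀ k, 0 < p k → OptPrice v x k) (i : Fin K) : rev v x i ≤ marketPS v p x :=
  calc rev v x i = ∑ k, p k * rev v x i := by rw [← sum_mul, hp1, one_mul]
    _ ≤ marketPS v p x := sum_le_sum fun k _ => by
      rcases (hp k).eq_or_lt with h | h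
      · rw [← h, zero_mul, zero_mul]
      · exact mul_le_mul_of_nonneg_left (hopt k h i) h.le

theorem marketCS_add_marketPS_le (hv0 : ∀ j, 0 ≤ v j) {p x : Fin K → ℝ} (hp : ∀ k, 0 ≤ p k)
    (hp1 : ∑ k, p k = 1) (hx : ∀ j, 0 ≤ x j) :
    marketCS v p x + marketPS v p x ≤ ∑ j, v j * x j :=
  calc marketCS v p x + marketPS v p x = ∑ k, p k * ∑ j ∈ Ici k, v j * x j := by
        simp only [marketCS, marketPS, rev, ← sum_add_distrib, mul_sum,
          ← sum_add_distrib]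
        exact sum_congr rfl fun _ _ => sum_congr rfl fun _ _ => by ring
    _ ≤ ∑ k, p k * ∑ j, v j * x j := sum_le_sum fun k _ => mul_le_mul_of_nonneg_left
        (sum_le_sum_of_subset_of_nonneg (subset_univ _) fun j _ _ => mul_nonneg (hv0 j) (hx j))
        (hp k)
    _ = ∑ j, v j * x j := by rw [← sum_mul, hp1, one_mul]

theorem surplus_bounds (hv0 : ∀ j, 0 ≤ v j) (hv : Monotone v) {xstar : Fin K → ℝ}
    {σ : (Fin K → ℝ) →₀ ℝ} {φ : (Fin K → ℝ) → Fin K → ℝ} (hσ : IsSegmentation xstar σ)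
    (hφ : IsPricingRule σ φ) (hφopt : IsOptimalPricing v σ φ) (i : Fin K) :
    0 ≤ consumerSurplus v σ φ ∧ rev v xstar i ≤ producerSurplus v σ φ ∧
      consumerSurplus v σ φ + producerSurplus v σ φ ≤ ∑ j, v j * xstar j := by
  obtain ⟨hσ0, -, hmkt, havg⟩ := hσ
  refine ⟨sum_nonneg fun x hx => mul_nonneg (hσ0 x)
    (marketCS_nonneg hv (hφ x hx).1 (hmkt x hx).1), ?_, ?_⟩
  · calc rev v xstar i = ∑ x ∈ σ.support, σ x * rev v x i := by
          have := sum_mul_rev σ.support σ id v i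
          simp only [id_eq, havg] at this
          exact this.symm
      _ ≤ producerSurplus v σ φ := sum_le_sum fun x hx => mul_le_mul_of_nonneg_left
          (rev_le_marketPS (hφ x hx).1 (hφ x hx).2 (hφopt x hx) i) (hσ0 x)
  · calc consumerSurplus v σ φ + producerSurplus v σ φ
        = ∑ x ∈ σ.support, σ x * (marketCS v (φ x) x + marketPS v (φ x) x) := by
          simp only [consumerSurplus, producerSurplus, mul_add, sum_add_distrib]; rfl
      _ ≤ ∑ x ∈ σ.support, σ x * ∑ j, v j * x j := sum_le_sum fun x hx =>
          mul_le_mul_of_nonneg_left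
            (marketCS_add_marketPS_le hv0 (hφ x hx).1 (hφ x hx).2 (hmkt x hx).1) (hσ0 x)
      _ = ∑ j, v j * xstar j := by
          have := sum_mul_sum_mul_apply σ.support σ id univ v
          simpa only [id_eq, havg] using this

end MarketSurplus

section Support

variable {v x : Fin K → ℝ} {S : Finset (Fin K)}

theorem sum_Ici_eq_zero_or_exists (hxS : ∀ j ∉ S, x j = 0) (i : Fin K) :
    ∑ j ∈ Ici i, x j = 0 ∨ ∃ s ∈ S, i ≤ s ∧ ∑ j ∈ Ici i, x j = ∑ j ∈ Ici s, x j := by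
  by_cases h : (S.filter (i ≤ ·)).Nonempty
  · right
    obtain ⟨hsS, his⟩ := mem_filter.1 ((S.filter (i ≤ ·)).min'_mem h)
    refine ⟨_, hsS, his, (sum_subset (Ici_subset_Ici.2 his) fun j hj hjs => ?_).symm⟩
    exact hxS j fun hjS => hjs (mem_Ici.2 (min'_le _ _ (mem_filter.2 ⟨hjS, mem_Ici.1 hj⟩)))
  · left
    exact sum_eq_zero fun j hj => hxS j fun hjS => h ⟨j, mem_filter.2 ⟨hjS, mem_Ici.1 hj⟩⟩

theorem optPrice_of_forall_mem_le (hv0 : ∀ j, 0 ≤ v j) (hv : Monotone v) (hx : ∀ j, 0 ≤ x j)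
    (hxS : ∀ j ∉ S, x j = 0) {k : Fin K} (hk : ∀ s ∈ S, rev v x s ≤ rev v x k) :
    OptPrice v x k := by
  intro i
  rcases sum_Ici_eq_zero_or_exists hxS i with h0 | ⟨s, hs, his, heq⟩
  · rw [rev, h0, mul_zero]
    exact mul_nonneg (hv0 k) (sum_nonneg fun j _ => hx j)
  · calc rev v x i ≤ rev v x s := by
          rw [rev, rev, heq]
          exact mul_le_mul_of_nonneg_right (hv his) (sum_nonneg fun j _ => hx j)
      _ ≤ rev v x k := hk s hs

theorem OptPrice.apply_ne_zero (hv0 : ∀ j, 0 < v j) (hv : StrictMono v) (hx : ∀ j, 0 ≤ x j)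
    (hx0 : x ≠ 0) {k : Fin K} (hk : OptPrice v x k) : x k ≠ 0 := by
  intro hxk
  have tail_pos : ∀ s, x s ≠ 0 → 0 < ∑ j ∈ Ici s, x j := fun s hs =>
    ((hx s).lt_of_ne' hs).trans_le (single_le_sum (fun j _ => hx j) (mem_Ici.2 le_rfl))
  obtain ⟨j₀, hj₀ : x j₀ ≠ 0⟩ := Function.ne_iff.1 hx0
  rcases sum_Ici_eq_zero_or_exists (S := univ.filter (x · ≠ 0)) (x := x) (by simp) k with
    h0 | ⟨s, hs, hks, heq⟩
  · have := hk j₀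
    rw [rev, rev, h0, mul_zero] at this
    exact this.not_gt (mul_pos (hv0 j₀) (tail_pos j₀ hj₀))
  · have hxs : x s ≠ 0 := (mem_filter.1 hs).2
    have := hk s
    rw [rev, rev, heq] at this
    exact this.not_gt (mul_lt_mul_of_pos_right
      (hv (hks.lt_of_ne (by rintro rfl; exact hxs hxk))) (tail_pos s hxs))

end Support

section CharMarket

variable {v : Fin K → ℝ} {S : Finset (Fin K)} {j k : Fin K}

noncomputable def invNext (v : Fin K → ℝ) (S : Finset (Fin K)) (n : ℕ) : ℝ :=
  if h : (S.filter (n ≤ ·.val)).Nonempty then (v ((S.filter (n ≤ ·.val)).min' h))⁻¹ else 0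

/-- The market `x^S` of the paper: the mass of the valuations `≥ v k` is proportional to
`1 / v s` for the least `s ∈ S` with `k ≤ s`, so that every price in `S` earns the same
revenue `v (S.min' _)`. -/
noncomputable def charMarket (v : Fin K → ℝ) (S : Finset (Fin K)) (j : Fin K) : ℝ :=
  (invNext v S 0)⁻¹ * (invNext v S j - invNext v S (j + 1))

theorem invNext_nonneg (hv0 : ∀ j, 0 < v j) (n : ℕ) : 0 ≤ invNext v S n := by
  unfold invNext
  split_ifs
  · exact inv_nonneg.2 (hv0 _).le
  · exact le_rfl

theorem invNext_antitone (hv0 : ∀ j, 0 < v j) (hv : Monotone v) : Antitone (invNext v S) := by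
  intro n n' hnn'
  have hsub : S.filter (n' ≤ ·.val) ⊆ S.filter (n ≤ ·.val) := fun s hs => by
    simp only [mem_filter] at hs ⊢
    exact ⟨hs.1, hnn'.trans hs.2⟩
  by_cases h : (S.filter (n' ≤ ·.val)).Nonempty
  · rw [invNext, invNext, dif_pos h, dif_pos (h.mono hsub)]
    exact inv_anti₀ (hv0 _) (hv (min'_subset h hsub))
  · rw [invNext, dif_neg h]
    exact invNext_nonneg hv0 n

theorem invNext_of_mem (hk : k ∈ S) : invNext v S k = (v k)⁻¹ := by
  have hk' : k ∈ S.filter (k.val ≤ ·.val) := mem_filter.2 ⟨hk, le_rfl⟩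
  rw [invNext, dif_pos ⟨k, hk'⟩]
  congr 2
  exact le_antisymm (min'_le _ _ hk') (le_min' _ _ _ fun s hs => (mem_filter.1 hs).2)

theorem invNext_of_le {n : ℕ} (h : K ≤ n) : invNext v S n = 0 := by
  rw [invNext, dif_neg]
  rintro ⟨s, hs⟩
  have := (mem_filter.1 hs).2
  omega

theorem mul_invNext_le_one (hv0 : ∀ j, 0 < v j) (hv : Monotone v) (k : Fin K) :
    v k * invNext v S k ≤ 1 := by
  unfold invNext
  split_ifs with h
  · rw [← div_eq_mul_inv]
    exact div_le_one_of_le₀ (hv (mem_filter.1 (min'_mem _ h)).2) (hv0 _).le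
  · rw [mul_zero]
    exact zero_le_one

theorem invNext_succ_of_notMem (hj : j ∉ S) : invNext v S (j + 1) = invNext v S j := by
  have : S.filter ((j.val + 1) ≤ ·.val) = S.filter (j.val ≤ ·.val) :=
    filter_congr fun s hs => ⟨fun h => by omega,
      fun h => Nat.lt_of_le_of_ne h fun he => hj (Fin.ext he ▸ hs)⟩
  simp only [invNext, this]

theorem invNext_succ_lt (hv0 : ∀ j, 0 < v j) (hv : StrictMono v) (hk : k ∈ S) :
    invNext v S (k + 1) < invNext v S k := by
  rw [invNext_of_mem hk, invNext]
  split_ifs with h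
  · exact inv_strictAnti₀ (hv0 k) (hv (mem_filter.1 (min'_mem _ h)).2)
  · exact inv_pos.2 (hv0 k)

theorem invNext_zero_pos (hv0 : ∀ j, 0 < v j) (hv : Monotone v) (hk : k ∈ S) :
    0 < invNext v S 0 :=
  (inv_pos.2 (hv0 k)).trans_le (invNext_of_mem hk ▸ invNext_antitone hv0 hv (Nat.zero_le _))

theorem sum_Ici_charMarket (k : Fin K) :
    ∑ j ∈ Ici k, charMarket v S j = (invNext v S 0)⁻¹ * invNext v S k := by
  have h := sum_Ico_sub (fun n => -invNext v S n) k.isLt.le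
  rw [← Fin.map_valEmbedding_Ici, sum_map] at h
  simp only [neg_sub_neg, Fin.valEmbedding_apply] at h
  simp only [charMarket, ← mul_sum, h, invNext_of_le le_rfl, sub_zero]

theorem charMarket_nonneg (hv0 : ∀ j, 0 < v j) (hv : Monotone v) (j : Fin K) :
    0 ≤ charMarket v S j :=
  mul_nonneg (inv_nonneg.2 (invNext_nonneg hv0 0))
    (sub_nonneg.2 (invNext_antitone hv0 hv (Nat.le_succ _)))

theorem charMarket_eq_zero (hj : j ∉ S) : charMarket v S j = 0 := by
  rw [charMarket, invNext_succ_of_notMem hj, sub_self, mul_zero]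

theorem charMarket_pos (hv0 : ∀ j, 0 < v j) (hv : StrictMono v) (hj : j ∈ S) :
    0 < charMarket v S j :=
  mul_pos (inv_pos.2 (invNext_zero_pos hv0 hv.monotone hj))
    (sub_pos.2 (invNext_succ_lt hv0 hv hj))

theorem filter_charMarket_ne_zero (hv0 : ∀ j, 0 < v j) (hv : StrictMono v) :
    univ.filter (charMarket v S · ≠ 0) = S := by
  ext j
  simp only [mem_filter, mem_univ, true_and]
  exact ⟨fun h => by_contra fun hj => h (charMarket_eq_zero hj),
    fun hj => (charMarket_pos hv0 hv hj).ne'⟩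

theorem isMarket_charMarket (hv0 : ∀ j, 0 < v j) (hv : Monotone v) (hS : S.Nonempty) :
    IsMarket K (charMarket v S) := by
  obtain ⟨k, hk⟩ := hS
  refine ⟨charMarket_nonneg hv0 hv, ?_⟩
  calc ∑ j, charMarket v S j
      = ∑ n ∈ range K, (invNext v S 0)⁻¹ * (invNext v S n - invNext v S (n + 1)) :=
        Fin.sum_univ_eq_sum_range
          (fun n => (invNext v S 0)⁻¹ * (invNext v S n - invNext v S (n + 1))) K
    _ = 1 := by
        rw [← mul_sum, sum_range_sub', invNext_of_le le_rfl, sub_zero,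
          inv_mul_cancel₀ (invNext_zero_pos hv0 hv hk).ne']

theorem charMarket_ne_zero (hv0 : ∀ j, 0 < v j) (hv : Monotone v) (hS : S.Nonempty) :
    charMarket v S ≠ 0 := fun h => by
  simpa [h] using (isMarket_charMarket hv0 hv hS).2

theorem rev_charMarket_of_mem (hv0 : ∀ j, 0 < v j) (hk : k ∈ S) :
    rev v (charMarket v S) k = (invNext v S 0)⁻¹ := by
  rw [rev, sum_Ici_charMarket, invNext_of_mem hk, mul_left_comm, mul_inv_cancel₀ (hv0 k).ne',
    mul_one]

theorem optPrice_charMarket (hv0 : ∀ j, 0 < v j) (hv : Monotone v) (hk : k ∈ S) :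
    OptPrice v (charMarket v S) k := by
  intro i
  rw [rev_charMarket_of_mem hv0 hk, rev, sum_Ici_charMarket, mul_left_comm]
  exact mul_le_of_le_one_right (inv_nonneg.2 (invNext_nonneg hv0 0)) (mul_invNext_le_one hv0 hv i)

theorem charMarket_singleton (hv0 : ∀ j, 0 < v j) (hv : Monotone v) (k : Fin K) :
    charMarket v {k} = Pi.single k 1 := by
  funext j
  by_cases hj : j = k
  · subst hj
    have := (isMarket_charMarket hv0 hv (singleton_nonempty j)).2
    rw [sum_eq_single j (fun i _ hi => charMarket_eq_zero (by simpa using hi)) (by simp)] at this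
    rw [this, Pi.single_eq_same]
  · rw [charMarket_eq_zero (by simpa using hj), Pi.single_eq_of_ne hj]

end CharMarket

theorem exists_charMarket_decomposition {v : Fin K → ℝ} (hv0 : ∀ j, 0 < v j)
    (hv : StrictMono v) {i : Fin K} (z : Fin K → ℝ) (hz : ∀ j, 0 ≤ z j) (hi : OptPrice v z i) :
    ∃ w : Finset (Fin K) → ℝ, (∀ S, 0 ≤ w S) ∧ (∀ S, 0 < w S → i ∈ S) ∧
      ∑ S, w S • charMarket v S = z := by
  induction hn : #(univ.filter (z · ≠ 0)) using Nat.strong_induction_on generalizing z with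
  | _ n ih =>
  by_cases hz0 : z = 0
  · exact ⟨0, fun _ => le_rfl, fun _ h => (lt_irrefl _ h).elim, by simp [hz0]⟩
  set S := univ.filter (z · ≠ 0)
  have hzS : ∀ j, z j ≠ 0 → j ∈ S := fun j hj => mem_filter.2 ⟨mem_univ j, hj⟩
  have hiS : i ∈ S := hzS i (hi.apply_ne_zero hv0 hv hz hz0)
  have hx0 : ∀ j ∉ S, charMarket v S j = 0 := fun j => charMarket_eq_zero
  have hxpos : ∀ j ∈ S, 0 < charMarket v S j := fun j => charMarket_pos hv0 hv
  obtain ⟨j₁, hj₁, hmin⟩ := exists_min_image S (fun j => z j / charMarket v S j) ⟨i, hiS⟩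
  set α := z j₁ / charMarket v S j₁
  set z' := z - α • charMarket v S
  have hz'0 : ∀ j, 0 ≤ z' j := fun j => by
    by_cases hj : j ∈ S
    · have := (le_div_iff₀ (hxpos j hj)).1 (hmin j hj)
      simp only [z', Pi.sub_apply, Pi.smul_apply, smul_eq_mul]
      linarith
    · simp [z', hx0 j hj, hz j]
  have hz'S : ∀ j ∉ S, z' j = 0 := fun j hj => by
    simp [z', hx0 j hj, by simpa using mt (hzS j) hj]
  have hz'j₁ : z' j₁ = 0 := by
    simp [z', α, div_mul_cancel₀ _ (hxpos j₁ hj₁).ne']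
  have hcard : #(univ.filter (z' · ≠ 0)) < n := by
    refine hn ▸ (card_le_card fun j hj => ?_).trans_lt (card_erase_lt_of_mem hj₁)
    have hj : z' j ≠ 0 := (mem_filter.1 hj).2
    exact mem_erase.2 ⟨by rintro rfl; exact hj hz'j₁, by_contra fun h => hj (hz'S j h)⟩
  have hi' : OptPrice v z' i := optPrice_of_forall_mem_le (fun j => (hv0 j).le) hv.monotone
    hz'0 hz'S fun s hs => by
      simp only [z', rev_sub_smul, rev_charMarket_of_mem hv0 hs, rev_charMarket_of_mem hv0 hiS]
      linarith [hi s]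
  obtain ⟨w, hw0, hwi, hwz⟩ := ih _ hcard z' hz'0 hi' rfl
  refine ⟨w + Pi.single S α, fun T => ?_, fun T hT => ?_, ?_⟩
  · have hα : 0 ≤ α := div_nonneg (hz j₁) (hxpos j₁ hj₁).le
    simp only [Pi.add_apply, Pi.single_apply]
    split_ifs <;> linarith [hw0 T]
  · by_cases hTS : T = S
    · exact hTS ▸ hiS
    · rw [Pi.add_apply, Pi.single_eq_of_ne hTS, add_zero] at hT
      exact hwi T hT
  · simp [Pi.single_apply, add_smul, sum_add_distrib, hwz, z']

section FiniteFamily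

variable {ι α : Type*} [Fintype ι]

theorem sum_support_sum_single_smul {M : Type*} [AddCommMonoid M] [Module ℝ M] (m : ι → α)
    (c : ι → ℝ) (g : α → M) :
    ∑ x ∈ (∑ i, Finsupp.single (m i) (c i)).support,
      (∑ i, Finsupp.single (m i) (c i)) x • g x = ∑ i, c i • g (m i) := by
  change Finsupp.sum _ (fun x a => a • g x) = _
  rw [← Finsupp.sum_finsetSum_index (h := fun x a => a • g x) (fun _ => zero_smul _ _)
    fun _ _ _ => add_smul _ _ _]
  exact sum_congr rfl fun i _ => Finsupp.sum_single_index (zero_smul _ _)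

theorem exists_of_mem_support_sum_single {m : ι → α} {c : ι → ℝ} (hc : ∀ i, 0 ≤ c i) {x : α}
    (hx : x ∈ (∑ i, Finsupp.single (m i) (c i)).support) : ∃ i, 0 < c i ∧ m i = x := by
  classical
  by_contra! h
  refine Finsupp.mem_support_iff.1 hx ?_
  rw [Finsupp.finsetSum_apply]
  refine sum_eq_zero fun i _ => ?_
  rw [Finsupp.single_apply]
  split_ifs with hi
  · exact le_antisymm (not_lt.1 fun hpos => h i hpos hi) (hc i)
  · rfl

theorem isSegmentation_sum_single {xstar : Fin K → ℝ} {m : ι → Fin K → ℝ} {c : ι → ℝ}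
    (hc : ∀ i, 0 ≤ c i) (hc1 : ∑ i, c i = 1) (hm : ∀ i, 0 < c i → IsMarket K (m i))
    (havg : ∑ i, c i • m i = xstar) :
    IsSegmentation xstar (∑ i, Finsupp.single (m i) (c i)) := by
  refine ⟨fun x => ?_, ?_, fun x hx => ?_, ?_⟩
  · exact (sum_nonneg fun i _ => Finsupp.single_nonneg.2 (hc i) :
      (0 : (Fin K → ℝ) →₀ ℝ) ≤ ∑ i, Finsupp.single (m i) (c i)) x
  · simpa [hc1] using sum_support_sum_single_smul m c fun _ => (1 : ℝ)
  · obtain ⟨i, hi, rfl⟩ := exists_of_mem_support_sum_single hc hx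
    exact hm i hi
  · simpa using (sum_support_sum_single_smul m c id).trans havg

end FiniteFamily

section LowHighPricing

noncomputable def lowHighPricing (t : ℝ) (x : Fin K → ℝ) : Fin K → ℝ :=
  if h : (univ.filter (x · ≠ 0)).Nonempty then
    t • Pi.single ((univ.filter (x · ≠ 0)).min' h) 1 +
      (1 - t) • Pi.single ((univ.filter (x · ≠ 0)).max' h) 1
  else 0

variable {t : ℝ} {x : Fin K → ℝ}

theorem sum_smul_single_add_smul_single_mul (t : ℝ) (a b : Fin K) (g : Fin K → ℝ) :
    ∑ k, (t • Pi.single a 1 + (1 - t) • Pi.single b 1 : Fin K → ℝ) k * g k =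
      t * g a + (1 - t) * g b := by
  simp [Pi.single_apply, add_mul, sum_add_distrib]

theorem lowHighPricing_nonneg (ht0 : 0 ≤ t) (ht1 : t ≤ 1) (k : Fin K) :
    0 ≤ lowHighPricing t x k := by
  unfold lowHighPricing
  split_ifs
  · simp only [Pi.add_apply, Pi.smul_apply, Pi.single_apply, smul_eq_mul]
    split_ifs <;> linarith
  · exact le_rfl

theorem sum_lowHighPricing (t : ℝ) (hx : x ≠ 0) : ∑ k, lowHighPricing t x k = 1 := by
  have h : (univ.filter (x · ≠ 0)).Nonempty := by
    obtain ⟨j, hj⟩ := Function.ne_iff.1 hx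
    exact ⟨j, mem_filter.2 ⟨mem_univ j, hj⟩⟩
  simpa [lowHighPricing, dif_pos h] using sum_smul_single_add_smul_single_mul t _ _ 1

theorem apply_ne_zero_of_lowHighPricing_pos {k : Fin K} (hk : 0 < lowHighPricing t x k) :
    x k ≠ 0 := by
  unfold lowHighPricing at hk
  split_ifs at hk with h
  · simp only [Pi.add_apply, Pi.smul_apply, Pi.single_apply, smul_eq_mul] at hk
    have hk' : k ∈ univ.filter (x · ≠ 0) := by
      split_ifs at hk with h₁ h₂ h₂
      · exact h₁ ▸ min'_mem _ h
      · exact h₁ ▸ min'_mem _ h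
      · exact h₂ ▸ max'_mem _ h
      · simp at hk
    exact (mem_filter.1 hk').2
  · exact (lt_irrefl _ hk).elim

end LowHighPricing

section CharMarketSurplus

variable {v : Fin K → ℝ} {S : Finset (Fin K)} {k : Fin K}

theorem lowHighPricing_charMarket (hv0 : ∀ j, 0 < v j) (hv : StrictMono v) (hS : S.Nonempty)
    (t : ℝ) : lowHighPricing t (charMarket v S) =
      t • Pi.single (S.min' hS) 1 + (1 - t) • Pi.single (S.max' hS) 1 := by
  simp only [lowHighPricing, filter_charMarket_ne_zero hv0 hv, dif_pos hS]

theorem marketPS_charMarket (hv0 : ∀ j, 0 < v j) (hv : StrictMono v) (hk : k ∈ S) (t : ℝ) :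
    marketPS v (lowHighPricing t (charMarket v S)) (charMarket v S) =
      rev v (charMarket v S) k := by
  have hS : S.Nonempty := ⟨k, hk⟩
  rw [marketPS, lowHighPricing_charMarket hv0 hv hS, sum_smul_single_add_smul_single_mul,
    rev_charMarket_of_mem hv0 (min'_mem S hS), rev_charMarket_of_mem hv0 (max'_mem S hS),
    rev_charMarket_of_mem hv0 hk]
  ring

theorem marketCS_charMarket (hv0 : ∀ j, 0 < v j) (hv : StrictMono v) (hk : k ∈ S) (t : ℝ) :
    marketCS v (lowHighPricing t (charMarket v S)) (charMarket v S) =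
      t * (∑ j, v j * charMarket v S j - rev v (charMarket v S) k) := by
  have hS : S.Nonempty := ⟨k, hk⟩
  have hlow : ∑ j ∈ Ici (S.min' hS), (v j - v (S.min' hS)) * charMarket v S j =
      ∑ j, v j * charMarket v S j - rev v (charMarket v S) k := by
    have hsub : ∑ j ∈ Ici (S.min' hS), v j * charMarket v S j = ∑ j, v j * charMarket v S j :=
      sum_subset (subset_univ _) fun j _ hj => by
        rw [charMarket_eq_zero fun hjS => hj (mem_Ici.2 (min'_le S j hjS)), mul_zero]
    simp only [sub_mul, sum_sub_distrib, ← mul_sum]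
    rw [hsub, ← rev, rev_charMarket_of_mem hv0 (min'_mem S hS), rev_charMarket_of_mem hv0 hk]
  have hhigh : ∑ j ∈ Ici (S.max' hS), (v j - v (S.max' hS)) * charMarket v S j = 0 :=
    sum_eq_zero fun j hj => by
      rcases (mem_Ici.1 hj).eq_or_lt with h | h
      · rw [h, sub_self, zero_mul]
      · rw [charMarket_eq_zero fun hjS => h.not_ge (le_max' S j hjS), mul_zero]
  rw [marketCS, lowHighPricing_charMarket hv0 hv hS, sum_smul_single_add_smul_single_mul, hlow,
    hhigh, mul_zero, add_zero]

theorem marketCS_charMarket_singleton (hv0 : ∀ j, 0 < v j) (hv : StrictMono v) (t : ℝ)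
    (j : Fin K) : marketCS v (lowHighPricing t (charMarket v {j})) (charMarket v {j}) = 0 := by
  rw [marketCS_charMarket hv0 hv (mem_singleton_self j), charMarket_singleton hv0 hv.monotone]
  simp [rev, Pi.single_apply]

theorem marketPS_charMarket_singleton (hv0 : ∀ j, 0 < v j) (hv : StrictMono v) (t : ℝ)
    (j : Fin K) : marketPS v (lowHighPricing t (charMarket v {j})) (charMarket v {j}) = v j := by
  rw [marketPS_charMarket hv0 hv (mem_singleton_self j), charMarket_singleton hv0 hv.monotone]
  simp [rev, Pi.single_apply]

end CharMarketSurplus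

theorem exists_mix_weights {a b u p : ℝ} (hu : 0 ≤ u) (hp : a ≤ p) (hup : u + p ≤ b) :
    ∃ μ t : ℝ, 0 ≤ μ ∧ μ ≤ 1 ∧ 0 ≤ t ∧ t ≤ 1 ∧
      μ * a + (1 - μ) * b = p ∧ μ * (t * (b - a)) = u := by
  refine ⟨(b - p) / (b - a), u / (b - p), div_nonneg (by linarith) (by linarith),
    div_le_one_of_le₀ (by linarith) (by linarith), div_nonneg hu (by linarith),
    div_le_one_of_le₀ (by linarith) (by linarith), ?_, ?_⟩
  · rcases (show a ≤ b by linarith).eq_or_lt with rfl | hab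
    · simp only [sub_self, div_zero, zero_mul, sub_zero, one_mul, zero_add]
      linarith
    · field_simp
      ring
  · rcases (show p ≤ b by linarith).eq_or_lt with rfl | hpb
    · simp only [sub_self, div_zero, zero_mul, mul_zero]
      linarith
    · have hab : b - a ≠ 0 := by linarith
      field_simp

section FamilySurplus

variable {ι : Type*} [Fintype ι] (v : Fin K → ℝ) (m : ι → Fin K → ℝ) (c : ι → ℝ)
  (φ : (Fin K → ℝ) → Fin K → ℝ)

theorem consumerSurplus_sum_single :
    consumerSurplus v (∑ i, Finsupp.single (m i) (c i)) φ =
      ∑ i, c i * marketCS v (φ (m i)) (m i) :=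
  sum_support_sum_single_smul m c fun x => marketCS v (φ x) x

theorem producerSurplus_sum_single :
    producerSurplus v (∑ i, Finsupp.single (m i) (c i)) φ =
      ∑ i, c i * marketPS v (φ (m i)) (m i) :=
  sum_support_sum_single_smul m c fun x => marketPS v (φ x) x

end FamilySurplus

theorem lowHighPricing_isOptimal {v : Fin K → ℝ} (hv0 : ∀ j, 0 < v j) (hv : StrictMono v)
    {t : ℝ} (ht0 : 0 ≤ t) (ht1 : t ≤ 1) {σ : (Fin K → ℝ) →₀ ℝ}
    (hσ : ∀ x ∈ σ.support, ∃ S : Finset (Fin K), S.Nonempty ∧ x = charMarket v S) :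
    IsPricingRule σ (lowHighPricing t) ∧ IsOptimalPricing v σ (lowHighPricing t) := by
  refine ⟨fun x hx => ?_, fun x hx k hk => ?_⟩ <;> obtain ⟨S, hS, rfl⟩ := hσ x hx
  · exact ⟨lowHighPricing_nonneg ht0 ht1,
      sum_lowHighPricing t (charMarket_ne_zero hv0 hv.monotone hS)⟩
  · exact optPrice_charMarket hv0 hv.monotone
      (by_contra fun hkS => apply_ne_zero_of_lowHighPricing_pos hk (charMarket_eq_zero hkS))

section Extremal

variable {v xstar : Fin K → ℝ} {w : Finset (Fin K) → ℝ} {i : Fin K}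

theorem sum_mul_congr_of_mem (hw0 : ∀ S, 0 ≤ w S) (hwi : ∀ S, 0 < w S → i ∈ S)
    {f g : Finset (Fin K) → ℝ} (hfg : ∀ S, i ∈ S → f S = g S) :
    ∑ S, w S * f S = ∑ S, w S * g S :=
  sum_congr rfl fun S _ => by
    rcases (hw0 S).eq_or_lt with h | h
    · rw [← h, zero_mul, zero_mul]
    · rw [hfg S (hwi S h)]

theorem sum_weights_eq_one (hv0 : ∀ j, 0 < v j) (hv : Monotone v) (hw0 : ∀ S, 0 ≤ w S)
    (hwi : ∀ S, 0 < w S → i ∈ S) (hwx : ∑ S, w S • charMarket v S = xstar)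
    (hx1 : ∑ j, xstar j = 1) : ∑ S, w S = 1 := by
  have := sum_mul_sum_mul_apply univ w (charMarket v) univ 1
  simp only [Pi.one_apply, one_mul, hwx, hx1] at this
  calc ∑ S, w S = ∑ S, w S * 1 := by simp only [mul_one]
    _ = ∑ S, w S * ∑ j, charMarket v S j := sum_mul_congr_of_mem hw0 hwi fun S hS =>
        (isMarket_charMarket hv0 hv ⟨i, hS⟩).2.symm
    _ = 1 := this

theorem sum_mul_marketCS_charMarket (hv0 : ∀ j, 0 < v j) (hv : StrictMono v)
    (hw0 : ∀ S, 0 ≤ w S) (hwi : ∀ S, 0 < w S → i ∈ S) (hwx : ∑ S, w S • charMarket v S = xstar)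
    (t : ℝ) :
    ∑ S, w S * marketCS v (lowHighPricing t (charMarket v S)) (charMarket v S) =
      t * (∑ j, v j * xstar j - rev v xstar i) := by
  rw [sum_mul_congr_of_mem hw0 hwi fun S hS => marketCS_charMarket hv0 hv hS t]
  simp only [mul_sub, mul_left_comm _ t, sum_sub_distrib, ← mul_sum, sum_mul_sum_mul_apply,
    sum_mul_rev, hwx]

theorem sum_mul_marketPS_charMarket (hv0 : ∀ j, 0 < v j) (hv : StrictMono v)
    (hw0 : ∀ S, 0 ≤ w S) (hwi : ∀ S, 0 < w S → i ∈ S) (hwx : ∑ S, w S • charMarket v S = xstar)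
    (t : ℝ) :
    ∑ S, w S * marketPS v (lowHighPricing t (charMarket v S)) (charMarket v S) =
      rev v xstar i := by
  rw [sum_mul_congr_of_mem hw0 hwi fun S hS => marketPS_charMarket hv0 hv hS t, sum_mul_rev, hwx]

end Extremal

theorem exists_segmentation_of_surplus_bounds {v xstar : Fin K → ℝ} (hv0 : ∀ j, 0 < v j)
    (hv : StrictMono v) (hx : IsMarket K xstar) {i : Fin K} (hi : OptPrice v xstar i)
    {u π : ℝ} (hu : 0 ≤ u) (hπ : rev v xstar i ≤ π) (huπ : u + π ≤ ∑ j, v j * xstar j) :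
    ∃ (σ : (Fin K → ℝ) →₀ ℝ) (φ : (Fin K → ℝ) → Fin K → ℝ),
      IsSegmentation xstar σ ∧ IsPricingRule σ φ ∧ IsOptimalPricing v σ φ ∧
        consumerSurplus v σ φ = u ∧ producerSurplus v σ φ = π := by
  obtain ⟨μ, t, hμ0, hμ1, ht0, ht1, hPS, hCS⟩ := exists_mix_weights hu hπ huπ
  obtain ⟨w, hw0, hwi, hwx⟩ := exists_charMarket_decomposition hv0 hv xstar hx.1 hi
  -- mix the extremal segmentation `w` (weight `μ`) with perfect price discrimination
  let m : Finset (Fin K) ⊕ Fin K → Fin K → ℝ := Sum.elim (charMarket v) fun j => charMarket v {j}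
  let c : Finset (Fin K) ⊕ Fin K → ℝ := Sum.elim (fun S => μ * w S) fun j => (1 - μ) * xstar j
  have hc : ∀ a, 0 ≤ c a := by
    rintro (S | j)
    · exact mul_nonneg hμ0 (hw0 S)
    · exact mul_nonneg (by linarith) (hx.1 j)
  have hatom : ∀ a, 0 < c a → ∃ S : Finset (Fin K), S.Nonempty ∧ m a = charMarket v S := by
    rintro (S | j) ha
    · exact ⟨S, ⟨i, hwi S (pos_of_mul_pos_right ha hμ0)⟩, rfl⟩
    · exact ⟨{j}, singleton_nonempty j, rfl⟩
  obtain ⟨hφ, hφopt⟩ := lowHighPricing_isOptimal hv0 hv ht0 ht1 fun x hx => by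
    obtain ⟨a, ha, rfl⟩ := exists_of_mem_support_sum_single hc hx
    exact hatom a ha
  refine ⟨_, _, isSegmentation_sum_single hc ?_ (fun a ha => ?_) ?_, hφ, hφopt, ?_, ?_⟩
  · simp [c, Fintype.sum_sum_type, ← mul_sum, sum_weights_eq_one hv0 hv.monotone hw0 hwi hwx hx.2,
      hx.2]
  · obtain ⟨S, hS, h⟩ := hatom a ha
    exact h ▸ isMarket_charMarket hv0 hv.monotone hS
  · simp [c, m, Fintype.sum_sum_type, mul_smul, ← smul_sum, hwx,
      charMarket_singleton hv0 hv.monotone, ← pi_eq_sum_univ']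
  · rw [consumerSurplus_sum_single, Fintype.sum_sum_type]
    simp only [c, m, Sum.elim_inl, Sum.elim_inr, mul_assoc, ← mul_sum,
      sum_mul_marketCS_charMarket hv0 hv hw0 hwi hwx,
      marketCS_charMarket_singleton hv0 hv, mul_zero, sum_const_zero, add_zero, hCS]
  · rw [producerSurplus_sum_single, Fintype.sum_sum_type]
    simp only [c, m, Sum.elim_inl, Sum.elim_inr, mul_assoc, ← mul_sum,
      sum_mul_marketPS_charMarket hv0 hv hw0 hwi hwx,
      marketPS_charMarket_singleton hv0 hv, mul_comm (xstar _), hPS]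

theorem stmt0_general {K : ℕ} (v : Fin K → ℝ)
    (hv0 : ∀ k, 0 < v k) (hv : StrictMono v)
    (xstar : Fin K → ℝ) (hxstar : IsMarket K xstar)
    (wstar πstar : ℝ) (hw : wstar = ∑ j, v j * xstar j)
    (hπ : IsGreatest (Set.range (rev v xstar)) πstar)
    (u π : ℝ) :
    (∃ (σ : (Fin K → ℝ) →₀ ℝ) (φ : (Fin K → ℝ) → Fin K → ℝ),
        IsSegmentation xstar σ ∧ IsPricingRule σ φ ∧ IsOptimalPricing v σ φ ∧
        consumerSurplus v σ φ = u ∧ producerSurplus v σ φ = π) ↔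
      (0 ≤ u ∧ πstar ≤ π ∧ u + π ≤ wstar) := by
  obtain ⟨⟨i, rfl⟩, hmax⟩ := hπ
  have hi : OptPrice v xstar i := fun k => hmax ⟨k, rfl⟩
  subst hw
  constructor
  · rintro ⟨σ, φ, hσ, hφ, hφopt, rfl, rfl⟩
    exact surplus_bounds (fun k => (hv0 k).le) hv.monotone hσ hφ hφopt i
  · rintro ⟨hu, hπ, huπ⟩
    exact exists_segmentation_of_surplus_bounds hv0 hv hxstar hi hu hπ huπ

theorem stmt0 {K : ℕ} (hK : 2 ≤ K) (v : Fin K → ℝ)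
    (hv0 : ∀ k, 0 < v k) (hv : StrictMono v)
    (xstar : Fin K → ℝ) (hxstar : IsMarket K xstar) (hxpos : ∀ k, 0 < xstar k)
    (wstar πstar : ℝ) (hw : wstar = ∑ j, v j * xstar j)
    (hπ : IsGreatest (Set.range (rev v xstar)) πstar)
    (u π : ℝ) :
    (∃ (σ : (Fin K → ℝ) →₀ ℝ) (φ : (Fin K → ℝ) → Fin K → ℝ),
        IsSegmentation xstar σ ∧ IsPricingRule σ φ ∧ IsOptimalPricing v σ φ ∧
        consumerSurplus v σ φ = u ∧ producerSurplus v σ φ = π) ↔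
      (0 ≤ u ∧ πstar ≤ π ∧ u + π ≤ wstar) :=
  stmt0_general v hv0 hv xstar hxstar wstar πstar hw hπ u π
end

section
/- Suppose x* = x^V. Then there exists a direct segmentation (with its direct pricing rule) with consumer surplus u and producer surplus π if and only if either (1) u ≥ 0, π > π*, and u + π ≤ w*, or (2) π = π* and u = ∑_{j=k}^K (v_j − v_k) x*_j for some k ∈ {1,…,K}. -/
/-! At `x^V` every price earns the same revenue `v 0 = π*`, so every segment of a direct
segmentation earns at least `v 0` at its own price. If the producer gets exactly `π*`, every
segment earns `v 0` at every price, so it is `x^V` itself, and the segmentation is trivial.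
Conversely, any `(u, π)` with a strict profit gain is reached by selling a fraction of `x^V`
under perfect price discrimination and the rest as copies of `x^V` priced at `v 0` and at the
top value, then merging the pieces by price: each merged segment has its price as unique optimal
price, so the segments are distinct. -/

open Finset

section Pairing

variable {α ι : Type*}

lemma sum_mul_sum_smul_apply (s : Finset α) (g : α → ℝ) (A : Finset ι) (w : ι → ℝ)
    (xs : ι → α → ℝ) :
    ∑ j ∈ s, g j * (∑ k ∈ A, w k • xs k) j = ∑ k ∈ A, w k * ∑ j ∈ s, g j * xs k j := by
  simp only [Finset.sum_apply, Pi.smul_apply, smul_eq_mul, Finset.mul_sum]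
  rw [Finset.sum_comm]
  exact Finset.sum_congr rfl fun _ _ => Finset.sum_congr rfl fun _ _ => by ring

lemma eq_of_sum_mul_eq_of_le {A : Finset ι} {w a b : ι → ℝ} (hw : ∀ k ∈ A, 0 < w k)
    (hle : ∀ k ∈ A, a k ≤ b k) (h : ∑ k ∈ A, w k * a k = ∑ k ∈ A, w k * b k) :
    ∀ k ∈ A, a k = b k := by
  intro k hk
  have := (Finset.sum_eq_sum_iff_of_le fun k hk =>
    mul_le_mul_of_nonneg_left (hle k hk) (hw k hk).le).1 h k hk
  exact mul_left_cancel₀ (hw k hk).ne' this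

end Pairing

lemma eq_of_sum_Ici_eq {α M : Type*} [LinearOrder α] [LocallyFiniteOrderTop α] [SuccOrder α]
    [AddCommGroup M] {x y : α → M} (h : ∀ i, ∑ j ∈ Finset.Ici i, x j = ∑ j ∈ Finset.Ici i, y j) :
    x = y := by
  funext i
  have hi := h i
  rw [Finset.Ici_eq_cons_Ioi, Finset.sum_cons, Finset.sum_cons] at hi
  by_cases hmax : IsMax i
  · simpa [Finset.Ioi_eq_empty.2 hmax] using hi
  · rw [← Finset.Ici_succ_eq_Ioi_of_not_isMax hmax, h] at hi
    exact add_right_cancel hi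

def consumerSurplusAt {K : ℕ} (v x : Fin K → ℝ) (k : Fin K) : ℝ :=
  ∑ j ∈ Finset.Ici k, (v j - v k) * x j

section Revenue

variable {K : ℕ} {v : Fin K → ℝ}

lemma rev_eq_sum (v x : Fin K → ℝ) (i : Fin K) : rev v x i = ∑ j ∈ Finset.Ici i, v i * x j :=
  Finset.mul_sum _ _ _

lemma rev_sum_smul {ι : Type*} (A : Finset ι) (w : ι → ℝ) (xs : ι → Fin K → ℝ) (i : Fin K) :
    rev v (∑ k ∈ A, w k • xs k) i = ∑ k ∈ A, w k * rev v (xs k) i := by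
  simp only [rev_eq_sum, sum_mul_sum_smul_apply]

lemma consumerSurplusAt_add_rev (v x : Fin K → ℝ) (k : Fin K) :
    consumerSurplusAt v x k + rev v x k = ∑ j ∈ Finset.Ici k, v j * x j := by
  rw [consumerSurplusAt, rev_eq_sum, ← Finset.sum_add_distrib]
  exact Finset.sum_congr rfl fun j _ => by ring

lemma IsMarket.rev_zero [NeZero K] {x : Fin K → ℝ} (hx : IsMarket K x) : rev v x 0 = v 0 := by
  rw [rev, show Finset.Ici (0 : Fin K) = Finset.univ from Finset.Ici_bot, hx.2, mul_one]

lemma IsMarket.consumerSurplusAt_zero [NeZero K] {x : Fin K → ℝ} (hx : IsMarket K x) :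
    consumerSurplusAt v x 0 = ∑ j, v j * x j - v 0 := by
  simp only [consumerSurplusAt, show Finset.Ici (0 : Fin K) = Finset.univ from Finset.Ici_bot,
    sub_mul, Finset.sum_sub_distrib, ← Finset.mul_sum, hx.2, mul_one]

lemma consumerSurplusAt_last {n : ℕ} (v x : Fin (n + 1) → ℝ) :
    consumerSurplusAt v x (Fin.last n) = 0 := by
  simp [consumerSurplusAt, ← Fin.top_eq_last, Finset.Ici_top]

lemma eq_of_rev_eq (hv0 : ∀ k, 0 < v k) {x y : Fin K → ℝ} (h : ∀ i, rev v x i = rev v y i) :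
    x = y :=
  eq_of_sum_Ici_eq fun i => mul_left_cancel₀ (hv0 i).ne' (h i)

lemma IsCharMarket.rev_eq [NeZero K] {x : Fin K → ℝ} (hx : IsCharMarket v Finset.univ x)
    (i : Fin K) : rev v x i = v 0 :=
  (hx.2.2 i (Finset.mem_univ i) 0 (Finset.mem_univ 0)).trans hx.1.rev_zero

end Revenue

section Linearity

variable {K : ℕ} (v : Fin K → ℝ)

lemma rev_add (x y : Fin K → ℝ) (i : Fin K) : rev v (x + y) i = rev v x i + rev v y i := by
  simp only [rev, Pi.add_apply, Finset.sum_add_distrib, mul_add]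

lemma rev_smul (a : ℝ) (x : Fin K → ℝ) (i : Fin K) : rev v (a • x) i = a * rev v x i := by
  simp only [rev, Pi.smul_apply, smul_eq_mul, ← Finset.mul_sum]
  ring

lemma rev_single (a : ℝ) (i k : Fin K) :
    rev v (Pi.single k a) i = if i ≤ k then v i * a else 0 := by
  simp [rev, Finset.sum_pi_single']

lemma consumerSurplusAt_add (x y : Fin K → ℝ) (k : Fin K) :
    consumerSurplusAt v (x + y) k = consumerSurplusAt v x k + consumerSurplusAt v y k := by
  simp only [consumerSurplusAt, Pi.add_apply, mul_add, Finset.sum_add_distrib]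

lemma consumerSurplusAt_smul (a : ℝ) (x : Fin K → ℝ) (k : Fin K) :
    consumerSurplusAt v (a • x) k = a * consumerSurplusAt v x k := by
  simp only [consumerSurplusAt, Pi.smul_apply, smul_eq_mul, Finset.mul_sum]
  exact Finset.sum_congr rfl fun _ _ => by ring

lemma consumerSurplusAt_single_self (a : ℝ) (k : Fin K) :
    consumerSurplusAt v (Pi.single k a) k = 0 := by
  simp [consumerSurplusAt, Pi.single_apply]

variable {v}

lemma rev_single_lt (hv0 : ∀ k, 0 < v k) (hv : StrictMono v) {a : ℝ} (ha : 0 < a)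
    {i k : Fin K} (hik : i ≠ k) : rev v (Pi.single k a) i < rev v (Pi.single k a) k := by
  rw [rev_single, rev_single, if_pos le_rfl]
  split_ifs with hle
  · exact mul_lt_mul_of_pos_right (hv (lt_of_le_of_ne hle hik)) ha
  · exact mul_pos (hv0 k) ha

lemma injOn_of_rev_lt {A : Finset (Fin K)} {xs : Fin K → Fin K → ℝ}
    (h : ∀ k ∈ A, ∀ i ≠ k, rev v (xs k) i < rev v (xs k) k) : Set.InjOn xs A := by
  intro a ha b hb hab
  by_contra hne
  have h₁ := h a ha b (Ne.symm hne)
  have h₂ := h b hb a hne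
  rw [hab] at h₁
  exact lt_asymm h₁ h₂

end Linearity

namespace IsDirectSeg

variable {K : ℕ} {v xstar : Fin K → ℝ} {A : Finset (Fin K)} {xs : Fin K → Fin K → ℝ}
  {w : Fin K → ℝ}

lemma le_rev_self [NeZero K] (h : IsDirectSeg v xstar A xs w) {k : Fin K} (hk : k ∈ A) :
    v 0 ≤ rev v (xs k) k :=
  (h.2.1 k hk).rev_zero.symm.trans_le (h.2.2.1 k hk 0)

lemma le_directPS [NeZero K] (h : IsDirectSeg v xstar A xs w) : v 0 ≤ directPS v A xs w :=
  calc v 0 = ∑ k ∈ A, w k * v 0 := by rw [← Finset.sum_mul, h.2.2.2.2.1, one_mul]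
    _ ≤ directPS v A xs w := Finset.sum_le_sum fun k hk =>
      mul_le_mul_of_nonneg_left (h.le_rev_self hk) (h.2.2.2.1 k hk).le

lemma directCS_nonneg (hv : Monotone v) (h : IsDirectSeg v xstar A xs w) :
    0 ≤ directCS v A xs w :=
  Finset.sum_nonneg fun k hk => mul_nonneg (h.2.2.2.1 k hk).le <| Finset.sum_nonneg fun j hj =>
    mul_nonneg (sub_nonneg.2 (hv (Finset.mem_Ici.1 hj))) ((h.2.1 k hk).1 j)

/-- Consumers valuing below the price they face are not served. -/
lemma directCS_add_directPS_le (hv0 : ∀ k, 0 ≤ v k) (h : IsDirectSeg v xstar A xs w) :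
    directCS v A xs w + directPS v A xs w ≤ ∑ j, v j * xstar j := by
  obtain ⟨-, hmkt, -, hw, -, havg⟩ := h
  calc directCS v A xs w + directPS v A xs w
      = ∑ k ∈ A, w k * ∑ j ∈ Finset.Ici k, v j * xs k j := by
        simp only [directCS, directPS, ← Finset.sum_add_distrib, ← mul_add]
        exact Finset.sum_congr rfl fun k _ =>
          congrArg (w k * ·) (consumerSurplusAt_add_rev v (xs k) k)
    _ ≤ ∑ k ∈ A, w k * ∑ j, v j * xs k j := Finset.sum_le_sum fun k hk =>
        mul_le_mul_of_nonneg_left (Finset.sum_le_sum_of_subset_of_nonneg (Finset.subset_univ _)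
          fun j _ _ => mul_nonneg (hv0 j) ((hmkt k hk).1 j)) (hw k hk).le
    _ = ∑ j, v j * xstar j := by rw [← havg, sum_mul_sum_smul_apply]

lemma eq_singleton_of_directPS_eq [NeZero K] (hv0 : ∀ k, 0 < v k)
    (hrev : ∀ i, rev v xstar i = v 0) (h : IsDirectSeg v xstar A xs w)
    (hPS : directPS v A xs w = v 0) : ∃ k, A = {k} ∧ w k = 1 ∧ xs k = xstar := by
  have hle := fun k hk => h.le_rev_self (k := k) hk
  obtain ⟨hinj, -, hopt, hw, hw1, havg⟩ := h
  have hv0_sum : ∑ k ∈ A, w k * v 0 = v 0 := by rw [← Finset.sum_mul, hw1, one_mul]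
  have hself : ∀ k ∈ A, v 0 = rev v (xs k) k :=
    eq_of_sum_mul_eq_of_le hw hle (hv0_sum.trans hPS.symm)
  have hseg : ∀ k ∈ A, xs k = xstar := fun k hk => eq_of_rev_eq hv0 fun i =>
    (eq_of_sum_mul_eq_of_le hw (fun k hk => (hopt k hk i).trans_eq (hself k hk).symm)
      (by rw [← rev_sum_smul, havg, hrev, hv0_sum]) k hk).trans (hrev i).symm
  obtain ⟨k, hk⟩ : A.Nonempty := Finset.nonempty_of_sum_ne_zero (hw1.trans_ne one_ne_zero)
  have hA : A = {k} := Finset.eq_singleton_iff_unique_mem.2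
    ⟨hk, fun j hj => hinj hj hk ((hseg j hj).trans (hseg k hk).symm)⟩
  exact ⟨k, hA, by simpa [hA] using hw1, hseg k hk⟩

end IsDirectSeg

section Construction

variable {K : ℕ} {v xstar : Fin K → ℝ}

lemma isDirectSeg_singleton (hx : IsMarket K xstar) {k : Fin K} (hk : OptPrice v xstar k) :
    IsDirectSeg v xstar {k} (fun _ => xstar) (fun _ => 1) := by
  refine ⟨?_, fun _ _ => hx, fun j hj => ?_, fun _ _ => one_pos, by simp, by simp⟩
  · rw [Finset.coe_singleton]
    exact Set.injOn_singleton _ _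
  · rwa [Finset.mem_singleton.1 hj]

/-- Merge, price by price, a fraction `la` of `x*` sold under perfect price discrimination with
the fractions `c k` of `x*` sold at the (optimal) uniform price `v k`. -/
theorem exists_isDirectSeg_of_weights (hv0 : ∀ k, 0 < v k) (hv : StrictMono v)
    (hx : IsMarket K xstar) (hxpos : ∀ k, 0 < xstar k) (hopt : ∀ k, OptPrice v xstar k)
    {la : ℝ} (hla : 0 < la) {c : Fin K → ℝ} (hc : ∀ k, 0 ≤ c k) (hsum : la + ∑ k, c k = 1) :
    ∃ xs W, IsDirectSeg v xstar Finset.univ xs W ∧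
      directCS v Finset.univ xs W = ∑ k, c k * consumerSurplusAt v xstar k ∧
      directPS v Finset.univ xs W = la * ∑ j, v j * xstar j + ∑ k, c k * rev v xstar k := by
  set N : Fin K → Fin K → ℝ := fun k => la • Pi.single k (xstar k) + c k • xstar with hN
  set W : Fin K → ℝ := fun k => la * xstar k + c k
  have hWpos : ∀ k, 0 < W k := fun k => add_pos_of_pos_of_nonneg (mul_pos hla (hxpos k)) (hc k)
  have hWxs : ∀ k, W k • (W k)⁻¹ • N k = N k := fun k => smul_inv_smul₀ (hWpos k).ne' _
  have hrevN : ∀ k i, rev v (N k) i =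
      la * rev v (Pi.single k (xstar k)) i + c k * rev v xstar i := fun k i => by
    rw [rev_add, rev_smul, rev_smul]
  have hlt : ∀ k, ∀ i ≠ k, rev v ((W k)⁻¹ • N k) i < rev v ((W k)⁻¹ • N k) k := by
    intro k i hik
    rw [rev_smul, rev_smul, hrevN, hrevN]
    exact mul_lt_mul_of_pos_left (add_lt_add_of_lt_of_le
      (mul_lt_mul_of_pos_left (rev_single_lt hv0 hv (hxpos k) hik) hla)
      (mul_le_mul_of_nonneg_left (hopt k i) (hc k))) (inv_pos.2 (hWpos k))
  refine ⟨fun k => (W k)⁻¹ • N k, W, ⟨?inj, fun k _ => ⟨fun j => ?nonneg, ?sum⟩, ?opt,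
    fun k _ => hWpos k, ?wsum, ?avg⟩, ?cs, ?ps⟩
  case inj => exact injOn_of_rev_lt fun k _ => hlt k
  case opt => exact fun k _ i => (eq_or_ne i k).elim (fun h => h ▸ le_rfl) fun h => (hlt k i h).le
  case nonneg =>
    have hsingle : (0 : Fin K → ℝ) ≤ Pi.single k (xstar k) := Pi.single_nonneg.2 (hx.1 k)
    exact mul_nonneg (inv_nonneg.2 (hWpos k).le)
      (add_nonneg (mul_nonneg hla.le (hsingle j)) (mul_nonneg (hc k) (hx.1 j)))
  case sum =>
    simp only [hN, Pi.smul_apply, Pi.add_apply, smul_eq_mul, ← Finset.mul_sum,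
      Finset.sum_add_distrib, Finset.sum_pi_single', Finset.mem_univ, if_true, hx.2, mul_one]
    exact inv_mul_cancel₀ (hWpos k).ne'
  case wsum =>
    rw [← hsum, Finset.sum_add_distrib, ← Finset.mul_sum, hx.2, mul_one]
  case avg =>
    rw [Finset.sum_congr rfl fun k _ => hWxs k]
    simp only [hN, Finset.sum_add_distrib, ← Finset.smul_sum, ← Finset.sum_smul,
      LinearMap.sum_single_apply, ← add_smul, hsum, one_smul]
  case cs =>
    change ∑ k, W k * consumerSurplusAt v ((W k)⁻¹ • N k) k = _
    refine Finset.sum_congr rfl fun k _ => ?_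
    rw [← consumerSurplusAt_smul, hWxs, hN, consumerSurplusAt_add, consumerSurplusAt_smul,
      consumerSurplusAt_smul, consumerSurplusAt_single_self, mul_zero, zero_add]
  case ps =>
    change ∑ k, W k * rev v ((W k)⁻¹ • N k) k = _
    simp only [← rev_smul, hWxs, hrevN, rev_single, le_refl, if_true, Finset.sum_add_distrib,
      Finset.mul_sum]

end Construction

/-- Mixing perfect price discrimination (weight `la`), `x^V` priced at its lowest value
(consumer surplus `w* - v 0`) and `x^V` priced at its highest value (consumer surplus `0`),
with the weights fixed by the two target surpluses. -/
theorem exists_isDirectSeg_of_lt {n : ℕ} {v xstar : Fin (n + 1) → ℝ} (hv0 : ∀ k, 0 < v k)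
    (hv : StrictMono v) (hx : IsMarket (n + 1) xstar) (hxpos : ∀ k, 0 < xstar k)
    (hrev : ∀ i, rev v xstar i = v 0) {u π : ℝ} (hu : 0 ≤ u) (hπ : v 0 < π)
    (hle : u + π ≤ ∑ j, v j * xstar j) :
    ∃ A xs w, IsDirectSeg v xstar A xs w ∧ directCS v A xs w = u ∧ directPS v A xs w = π := by
  set D := ∑ j, v j * xstar j - v 0
  have hD : 0 < D := by linarith
  have hc : ∀ k, 0 ≤ (Pi.single 0 (u / D) + Pi.single (Fin.last n)
      ((∑ j, v j * xstar j - u - π) / D) : Fin (n + 1) → ℝ) k := by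
    intro k
    simp only [Pi.add_apply, Pi.single_apply]
    have := div_nonneg hu hD.le
    have := div_nonneg (by linarith : 0 ≤ ∑ j, v j * xstar j - u - π) hD.le
    split_ifs <;> linarith
  obtain ⟨xs, W, hseg, hCS, hPS⟩ := exists_isDirectSeg_of_weights hv0 hv hx hxpos
    (fun k i => ((hrev i).trans (hrev k).symm).le) (div_pos (sub_pos.2 hπ) hD) hc (by
      simp only [Pi.add_apply, Finset.sum_add_distrib, Finset.sum_pi_single', Finset.mem_univ,
        if_true]
      field_simp
      ring)
  refine ⟨_, xs, W, hseg, ?_, ?_⟩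
  · rw [hCS]
    simp only [Pi.add_apply, add_mul, Finset.sum_add_distrib, Pi.single_apply, ite_mul, zero_mul,
      Finset.sum_ite_eq', Finset.mem_univ, if_true, hx.consumerSurplusAt_zero,
      consumerSurplusAt_last, mul_zero, add_zero]
    exact div_mul_cancel₀ u hD.ne'
  · rw [hPS]
    simp only [Pi.add_apply, add_mul, Finset.sum_add_distrib, Pi.single_apply, ite_mul, zero_mul,
      Finset.sum_ite_eq', Finset.mem_univ, if_true, hrev]
    field_simp
    ring

theorem stmt2_general {K : ℕ} (v : Fin K → ℝ)
    (hv0 : ∀ k, 0 < v k) (hv : StrictMono v)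
    (xstar : Fin K → ℝ) (hxpos : ∀ k, 0 < xstar k)
    (wstar πstar : ℝ) (hw : wstar = ∑ j, v j * xstar j)
    (hπ : IsGreatest (Set.range (rev v xstar)) πstar)
    (hchar : IsCharMarket v Finset.univ xstar)
    (u π : ℝ) :
    (∃ (A : Finset (Fin K)) (xs : Fin K → Fin K → ℝ) (w : Fin K → ℝ),
        IsDirectSeg v xstar A xs w ∧ directCS v A xs w = u ∧ directPS v A xs w = π) ↔
      ((0 ≤ u ∧ πstar < π ∧ u + π ≤ wstar) ∨
       (π = πstar ∧ ∃ k : Fin K, u = ∑ j ∈ Finset.Ici k, (v j - v k) * xstar j)) := by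
  obtain ⟨n, rfl⟩ : ∃ n, K = n + 1 :=
    Nat.exists_eq_succ_of_ne_zero (by rintro rfl; simpa using hchar.1.2)
  have hrev := hchar.rev_eq
  obtain rfl : πstar = v 0 := hπ.unique ⟨⟨0, hrev 0⟩, Set.forall_mem_range.2 fun i => (hrev i).le⟩
  subst hw
  constructor
  · rintro ⟨A, xs, w, hseg, rfl, rfl⟩
    rcases hseg.le_directPS.eq_or_lt with hPS | hPS
    · obtain ⟨k, rfl, hw1, hxs⟩ := hseg.eq_singleton_of_directPS_eq hv0 hrev hPS.symm
      exact Or.inr ⟨hPS.symm, k, by simp [directCS, hw1, hxs]⟩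
    · exact Or.inl ⟨hseg.directCS_nonneg hv.monotone, hPS,
        hseg.directCS_add_directPS_le fun k => (hv0 k).le⟩
  · rintro (⟨hu, hπ, hle⟩ | ⟨rfl, k, rfl⟩)
    · exact exists_isDirectSeg_of_lt hv0 hv hchar.1 hxpos hrev hu hπ hle
    · exact ⟨{k}, _, _, isDirectSeg_singleton hchar.1 fun i => ((hrev i).trans (hrev k).symm).le,
        by simp [directCS], by simpa [directPS, rev] using hrev k⟩

theorem stmt2 {K : ℕ} (hK : 2 ≤ K) (v : Fin K → ℝ)
    (hv0 : ∀ k, 0 < v k) (hv : StrictMono v)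
    (xstar : Fin K → ℝ) (hxstar : IsMarket K xstar) (hxpos : ∀ k, 0 < xstar k)
    (wstar πstar : ℝ) (hw : wstar = ∑ j, v j * xstar j)
    (hπ : IsGreatest (Set.range (rev v xstar)) πstar)
    (hchar : IsCharMarket v Finset.univ xstar)
    (u π : ℝ) :
    (∃ (A : Finset (Fin K)) (xs : Fin K → Fin K → ℝ) (w : Fin K → ℝ),
        IsDirectSeg v xstar A xs w ∧ directCS v A xs w = u ∧ directPS v A xs w = π) ↔
      ((0 ≤ u ∧ πstar < π ∧ u + π ≤ wstar) ∨
       (π = πstar ∧ ∃ k : Fin K, u = ∑ j ∈ Finset.Ici k, (v j - v k) * xstar j)) :=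
  stmt2_general v hv0 hv xstar hxpos wstar πstar hw hπ hchar u π
end
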